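/- arXiv:math/0506241 — 2 statements merged into one kernel-verified Lean document; each statement's English description precedes it below -/
import Mathlib

section
/- Let h : [0,1] → ℝ≥0 satisfy h(p) = 0 for all p ≥ p₀, where 0 < p₀ < 1. Suppose there exist q with 0 < q < p₀ and δ > 0 such that for all p ∈ [q, p₀), h(p) ≥ δ(p₀ - p)²/log(1/(p₀ - p)). Then h is not three times differentiable at p₀ (i.e., there is no third derivative of h at p₀ in the sense that h, h', h'' exist near p₀ with h'' differentiable at p₀). -/
/-!
Since `h` vanishes on `[p₀, ∞)`, its first three derivatives vanish at `p₀`, so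
`h'' x = o(x - p₀)`, and integrating twice from `p₀` gives `h (p₀ - t) = o(t³)` as `t → 0⁺`.
This is incompatible with the lower bound `δ t² / log (1/t)`, because `t log (1/t) → 0`.
-/

open Filter Topology Set Asymptotics Real

lemma deriv_eq_zero_of_eq_zero_on_Ici {f : ℝ → ℝ} {a : ℝ} (hf : DifferentiableAt ℝ f a)
    (h0 : ∀ x, a ≤ x → f x = 0) {x : ℝ} (hx : a ≤ x) : deriv f x = 0 := by
  rcases hx.eq_or_lt with rfl | hax
  · rw [← hf.derivWithin (uniqueDiffWithinAt_Ici a),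
      derivWithin_congr (f := fun _ => 0) (s := Ici a) h0 (h0 a le_rfl),
      derivWithin_fun_const, Pi.zero_apply]
  · have hloc : f =ᶠ[𝓝 x] fun _ => 0 :=
      eventually_of_mem (Ioi_mem_nhds hax) fun y hy => h0 y (le_of_lt hy)
    rw [hloc.deriv_eq, deriv_const]

lemma abs_le_mul_sq_of_abs_deriv_deriv_le {f : ℝ → ℝ} {a b M : ℝ} (hab : a ≤ b)
    (hf : ∀ x ∈ Icc a b, DifferentiableAt ℝ f x ∧ DifferentiableAt ℝ (deriv f) x)
    (hfb : f b = 0) (hf'b : deriv f b = 0) (hM : ∀ x ∈ Icc a b, |deriv (deriv f) x| ≤ M) :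
    |f a| ≤ M * (b - a) ^ 2 := by
  have hbmem : b ∈ Icc a b := ⟨hab, le_rfl⟩
  have hamem : a ∈ Icc a b := ⟨le_rfl, hab⟩
  have hM₀ : 0 ≤ M := (abs_nonneg _).trans (hM b hbmem)
  have hf' : ∀ x ∈ Icc a b, ‖deriv f x‖ ≤ M * (b - a) := by
    intro x hx
    have := (convex_Icc a b).norm_image_sub_le_of_norm_deriv_le (fun y hy => (hf y hy).2) hM
      hx hbmem
    simp only [hf'b, zero_sub, norm_neg, Real.norm_eq_abs] at this
    rw [abs_of_nonneg (sub_nonneg.2 hx.2)] at this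
    exact this.trans (by gcongr; exact hx.1)
  have := (convex_Icc a b).norm_image_sub_le_of_norm_deriv_le (fun y hy => (hf y hy).1) hf'
    hbmem hamem
  rw [hfb, sub_zero, Real.norm_eq_abs, Real.norm_eq_abs, abs_sub_comm,
    abs_of_nonneg (sub_nonneg.2 hab)] at this
  linarith

lemma isLittleO_cube_of_deriv_deriv_isLittleO {f : ℝ → ℝ} {b ε : ℝ} (hε : 0 < ε)
    (hf : ∀ x ∈ Metric.ball b ε, DifferentiableAt ℝ f x ∧ DifferentiableAt ℝ (deriv f) x)
    (hfb : f b = 0) (hf'b : deriv f b = 0)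
    (hf'' : deriv (deriv f) =o[𝓝 b] fun x => x - b) :
    (fun t => f (b - t)) =o[𝓝[>] 0] fun t => t ^ 3 := by
  refine IsLittleO.of_bound fun c hc => ?_
  obtain ⟨r, hr, hbound⟩ := Metric.eventually_nhds_iff.1 (hf''.def hc)
  filter_upwards [Ioo_mem_nhdsGT (lt_min hr hε)] with t ⟨ht₀, htr⟩
  have hIcc : ∀ x ∈ Icc (b - t) b, dist x b < min r ε := fun x hx => by
    rw [Real.dist_eq, abs_of_nonpos (by linarith [hx.2])]
    linarith [hx.1]
  have hM : ∀ x ∈ Icc (b - t) b, |deriv (deriv f) x| ≤ c * t := by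
    intro x hx
    have := hbound ((hIcc x hx).trans_le (min_le_left _ _))
    simp only [Real.norm_eq_abs] at this
    rw [abs_of_nonpos (sub_nonpos.2 hx.2)] at this
    exact this.trans (by gcongr; linarith [hx.1])
  have := abs_le_mul_sq_of_abs_deriv_deriv_le (by linarith) (fun x hx =>
    hf x (Metric.mem_ball.2 ((hIcc x hx).trans_le (min_le_right _ _)))) hfb hf'b hM
  rw [Real.norm_eq_abs, Real.norm_eq_abs, abs_of_pos (pow_pos ht₀ 3)]
  calc |f (b - t)| ≤ c * t * (b - (b - t)) ^ 2 := this
    _ = c * t ^ 3 := by ring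

lemma eventually_cube_lt_mul_sq_div_log {δ : ℝ} (hδ : 0 < δ) :
    ∀ᶠ t in 𝓝[>] (0 : ℝ), t ^ 3 < δ * t ^ 2 / log (1 / t) := by
  have hlim : Tendsto (fun t => t * log t) (𝓝[>] 0) (𝓝 0) := by
    simpa using (continuous_mul_log.tendsto 0).mono_left nhdsWithin_le_nhds
  filter_upwards [self_mem_nhdsWithin, Ioo_mem_nhdsGT one_pos,
    hlim.eventually (lt_mem_nhds (neg_lt_zero.2 hδ))] with t (ht₀ : 0 < t) ht₁ hsmall
  have hlog : 0 < log (1 / t) := log_pos (one_lt_one_div ht₀ ht₁.2)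
  rw [lt_div_iff₀ hlog, one_div, log_inv]
  nlinarith [pow_pos ht₀ 2]

theorem stmt_0_general (h : ℝ → ℝ) (p₀ : ℝ)
    (hzero : ∀ p, p₀ ≤ p → h p = 0)
    (q δ : ℝ) (hqp₀ : q < p₀) (hδ : 0 < δ)
    (hlower : ∀ p ∈ Set.Ico q p₀,
      δ * (p₀ - p) ^ 2 / Real.log (1 / (p₀ - p)) ≤ h p) :
    ¬ ∃ ε > 0, (∀ x ∈ Metric.ball p₀ ε,
        DifferentiableAt ℝ h x ∧ DifferentiableAt ℝ (deriv h) x) ∧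
      DifferentiableAt ℝ (deriv (deriv h)) p₀ := by
  rintro ⟨ε, hε, hdiff, h₃⟩
  have hd₁ : ∀ x, p₀ ≤ x → deriv h x = 0 := fun x =>
    deriv_eq_zero_of_eq_zero_on_Ici (hdiff p₀ (Metric.mem_ball_self hε)).1 hzero
  have hd₂ : ∀ x, p₀ ≤ x → deriv (deriv h) x = 0 := fun x =>
    deriv_eq_zero_of_eq_zero_on_Ici (hdiff p₀ (Metric.mem_ball_self hε)).2 hd₁
  have hd₃ : HasDerivAt (deriv (deriv h)) 0 p₀ :=
    deriv_eq_zero_of_eq_zero_on_Ici h₃ hd₂ le_rfl ▸ h₃.hasDerivAt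
  have hsmall : (fun t => h (p₀ - t)) =o[𝓝[>] 0] fun t => t ^ 3 :=
    isLittleO_cube_of_deriv_deriv_isLittleO hε hdiff (hzero p₀ le_rfl) (hd₁ p₀ le_rfl) <| by
      simpa [hd₂ p₀ le_rfl] using hasDerivAt_iff_isLittleO.1 hd₃
  have hlarge : ∀ᶠ t in 𝓝[>] 0, δ * t ^ 2 / log (1 / t) ≤ h (p₀ - t) := by
    filter_upwards [Ioo_mem_nhdsGT (sub_pos.2 hqp₀)] with t ⟨ht₀, ht⟩
    simpa using hlower (p₀ - t) ⟨by linarith, by linarith⟩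
  obtain ⟨t, ht₀ : 0 < t, hle, hlt, hge⟩ := (eventually_mem_nhdsWithin.and
    ((hsmall.bound one_pos).and ((eventually_cube_lt_mul_sq_div_log hδ).and hlarge))).exists
  rw [one_mul, Real.norm_eq_abs, Real.norm_eq_abs] at hle
  linarith [le_abs_self (h (p₀ - t)), abs_of_pos (pow_pos ht₀ 3)]

/-- If `h : [0,1] → ℝ≥0` vanishes on `[p₀, 1]` and satisfies the lower bound
`h p ≥ δ (p₀ - p)² / log (1/(p₀ - p))` on `[q, p₀)`, then `h` is not three times
differentiable at `p₀` (in the sense that `h` and `deriv h` are differentiable on a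
neighborhood of `p₀` and `deriv (deriv h)` is differentiable at `p₀`). -/
theorem stmt_0 (h : ℝ → ℝ) (p₀ : ℝ) (hp₀ : p₀ ∈ Set.Ioo (0 : ℝ) 1)
    (hnonneg : ∀ p ∈ Set.Icc (0 : ℝ) 1, 0 ≤ h p)
    (hzero : ∀ p, p₀ ≤ p → h p = 0)
    (q δ : ℝ) (hq : 0 < q) (hqp₀ : q < p₀) (hδ : 0 < δ)
    (hlower : ∀ p ∈ Set.Ico q p₀,
      δ * (p₀ - p) ^ 2 / Real.log (1 / (p₀ - p)) ≤ h p) :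
    ¬ ∃ ε > 0, (∀ x ∈ Metric.ball p₀ ε,
        DifferentiableAt ℝ h x ∧ DifferentiableAt ℝ (deriv h) x) ∧
      DifferentiableAt ℝ (deriv (deriv h)) p₀ :=
  stmt_0_general h p₀ hzero q δ hqp₀ hδ hlower
end

section
/- Let τ₁, τ₂, … be i.i.d. random variables taking values in {1, 2, 3, …} with κ := E[τ₁] ≥ 1, and suppose P[τ₁ ≥ t] ≤ C₂·exp(-t/C₂) for all t ≥ 1 and some C₂ > 0. Define N_n := sup{m : τ₁ + ⋯ + τ_m ≤ n}. Then there exists C₃ > 0 depending only on C₂ such that for all ε ∈ (0,1) and all n ≥ 1, P[τ_{N_n+1} ≥ ε·n] ≤ C₃·n·exp(-ε·n/C₃). -/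
open MeasureTheory ProbabilityTheory

/-! Since every interarrival time is at least `1`, at most `n` renewals happen by time `n`,
so `N n ≤ n` and the event `τ (N n) ≥ εn` is covered by the `n + 1` events `τ m ≥ εn`,
`m ≤ n`, each as likely as `τ 0 ≥ εn`. The union bound and the
exponential tail give `(n + 1) C₂ exp (-εn / C₂)`; for `εn < 1` the trivial bound `1` suffices. -/

theorem sSup_setOf_sum_range_le_le {f : ℕ → ℕ} (hf : ∀ i, 1 ≤ f i) (n : ℕ) :
    sSup {m : ℕ | ∑ i ∈ Finset.range m, f i ≤ n} ≤ n := by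
  refine csSup_le ⟨0, by simp⟩ fun m hm => le_trans ?_ hm
  simpa using Finset.sum_le_sum fun i (_ : i ∈ Finset.range m) => hf i

theorem measureReal_apply_index_mem_le {Ω α : Type*} [MeasurableSpace Ω] [MeasurableSpace α]
    {μ : Measure Ω} [IsFiniteMeasure μ] {X : ℕ → Ω → α} (hX : ∀ i, Measurable (X i))
    (hident : ∀ i, μ.map (X i) = μ.map (X 0)) {K : Ω → ℕ} {n : ℕ} (hK : ∀ ω, K ω ≤ n)
    {s : Set α} (hs : MeasurableSet s) :
    μ.real {ω | X (K ω) ω ∈ s} ≤ (n + 1) * μ.real (X 0 ⁻¹' s) := by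
  have hcover : {ω | X (K ω) ω ∈ s} ⊆ ⋃ m ∈ Finset.range (n + 1), X m ⁻¹' s :=
    fun ω hω => Set.mem_biUnion (Finset.mem_range.2 (Nat.lt_succ_of_le (hK ω))) hω
  have hsame : ∀ m, μ.real (X m ⁻¹' s) = μ.real (X 0 ⁻¹' s) := fun m => by
    rw [← map_measureReal_apply (hX m) hs, ← map_measureReal_apply (hX 0) hs, hident m]
  calc μ.real {ω | X (K ω) ω ∈ s}
      ≤ μ.real (⋃ m ∈ Finset.range (n + 1), X m ⁻¹' s) := measureReal_mono hcover (measure_ne_top _ _)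
    _ ≤ ∑ m ∈ Finset.range (n + 1), μ.real (X m ⁻¹' s) := measureReal_biUnion_finset_le _ _
    _ = (n + 1) * μ.real (X 0 ⁻¹' s) := by simp [hsame]

theorem le_mul_exp_of_le_one {x n C : ℝ} (hx : x < 1) (hn : 1 ≤ n) (hC : 2 ≤ C) :
    1 ≤ C * n * Real.exp (-x / C) := by
  have hexp : 1 / 2 ≤ Real.exp (-x / C) := by
    have hxC : x / C ≤ 1 / 2 := by rw [div_le_iff₀ (by linarith)]; linarith
    linarith [Real.add_one_le_exp (-x / C), neg_div C x]
  have hCn : 2 ≤ C * n := by nlinarith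
  nlinarith

theorem succ_mul_exp_le_mul_exp {x n C C' : ℝ} (hx : 0 ≤ x) (hn : 1 ≤ n) (hC : 0 < C)
    (hC' : 2 * C ≤ C') :
    (n + 1) * (C * Real.exp (-x / C)) ≤ C' * n * Real.exp (-x / C') := by
  have hexp : Real.exp (-x / C) ≤ Real.exp (-x / C') := by
    rw [Real.exp_le_exp, neg_div, neg_div, neg_le_neg_iff]
    exact div_le_div_of_nonneg_left hx hC (by linarith)
  have hcoef : (n + 1) * C ≤ C' * n := by nlinarith
  calc (n + 1) * (C * Real.exp (-x / C)) ≤ (n + 1) * C * Real.exp (-x / C') := by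
        rw [← mul_assoc]; gcongr
    _ ≤ C' * n * Real.exp (-x / C') := by gcongr

theorem stmt_13_general {Ω : Type*} [MeasurableSpace Ω] (μ : Measure Ω) [IsProbabilityMeasure μ]
    (τ : ℕ → Ω → ℕ) (hmeas : ∀ i, Measurable (τ i))
    (hpos : ∀ i ω, 1 ≤ τ i ω)
    (hident : ∀ i, μ.map (τ i) = μ.map (τ 0))
    (C₂ : ℝ) (hC₂ : 0 < C₂)
    (htail : ∀ t : ℝ, 1 ≤ t →
      (μ {ω | t ≤ (τ 0 ω : ℝ)}).toReal ≤ C₂ * Real.exp (-t / C₂))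
    (N : ℕ → Ω → ℕ)
    (hN : ∀ n ω, N n ω = sSup {m : ℕ | ∑ i ∈ Finset.range m, τ i ω ≤ n}) :
    ∃ C₃ > 0, ∀ ε ∈ Set.Ioo (0 : ℝ) 1, ∀ n : ℕ, 1 ≤ n →
      (μ {ω | ε * n ≤ (τ (N n ω) ω : ℝ)}).toReal ≤
        C₃ * n * Real.exp (-ε * n / C₃) := by
  refine ⟨max (2 * C₂) 2, by positivity, fun ε hε n hn => ?_⟩
  have hn' : (1 : ℝ) ≤ n := by exact_mod_cast hn
  have hN_le : ∀ ω, N n ω ≤ n := fun ω =>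
    (hN n ω).trans_le (sSup_setOf_sum_range_le_le (hpos · ω) n)
  change μ.real _ ≤ _
  rw [neg_mul]
  by_cases hεn : 1 ≤ ε * n
  · calc μ.real {ω | ε * n ≤ (τ (N n ω) ω : ℝ)}
        ≤ (n + 1) * μ.real {ω | ε * n ≤ (τ 0 ω : ℝ)} :=
          measureReal_apply_index_mem_le (s := {k : ℕ | ε * n ≤ (k : ℝ)}) hmeas hident hN_le
            .of_discrete
      _ ≤ (n + 1) * (C₂ * Real.exp (-(ε * n) / C₂)) := by gcongr; exact htail _ hεn
      _ ≤ _ := succ_mul_exp_le_mul_exp (by positivity) hn' hC₂ (le_max_left _ _)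
  · exact measureReal_le_one.trans
      (le_mul_exp_of_le_one (not_le.1 hεn) hn' (le_max_right _ _))

/-- renewal overshoot tail bound (Lemma 2.1, abstract version). The
variables `τ 0, τ 1, …` are i.i.d. positive-integer valued with exponential tails;
`N n ω = sup {m | τ 0 + ⋯ + τ (m-1) ≤ n}` is the renewal counting process, and
(0-indexed) `τ (N n ω)` is the interarrival time `τ_{N_n + 1}` of the paper. -/
theorem stmt_13 {Ω : Type*} [MeasurableSpace Ω] (μ : Measure Ω) [IsProbabilityMeasure μ]
    (τ : ℕ → Ω → ℕ) (hmeas : ∀ i, Measurable (τ i))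
    (hpos : ∀ i ω, 1 ≤ τ i ω)
    (hindep : iIndepFun τ μ)
    (hident : ∀ i, μ.map (τ i) = μ.map (τ 0))
    (κ : ℝ) (hκdef : κ = ∫ ω, (τ 0 ω : ℝ) ∂μ) (hκ : 1 ≤ κ)
    (C₂ : ℝ) (hC₂ : 0 < C₂)
    (htail : ∀ t : ℝ, 1 ≤ t →
      (μ {ω | t ≤ (τ 0 ω : ℝ)}).toReal ≤ C₂ * Real.exp (-t / C₂))
    (N : ℕ → Ω → ℕ)
    (hN : ∀ n ω, N n ω = sSup {m : ℕ | ∑ i ∈ Finset.range m, τ i ω ≤ n}) :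
    ∃ C₃ > 0, ∀ ε ∈ Set.Ioo (0 : ℝ) 1, ∀ n : ℕ, 1 ≤ n →
      (μ {ω | ε * n ≤ (τ (N n ω) ω : ℝ)}).toReal ≤
        C₃ * n * Real.exp (-ε * n / C₃) :=
  stmt_13_general μ τ hmeas hpos hident C₂ hC₂ htail N hN
end
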